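/- arXiv:2007.10482 — 3 statements merged into one kernel-verified Lean document; each statement's English description precedes it below -/
import Mathlib

section
/- If f(τ)/g(τ) ≤ M for all τ ∈ (1,x) and p ≥ 1, then (H^{α,β}_{1,x}[f^p](x))^{1/p} ≤ (M/(M+1)) · (H^{α,β}_{1,x}[(f+g)^p](x))^{1/p}, for positive functions f, g with finite integrals, α > 0, β ∈ (0,1], x > 1. -/
/-! `f / g ≤ M` gives `f ≤ M/(M+1) · (f + g)` pointwise. The Hadamard integral is positive and
linear, so `H[f^p] ≤ (M/(M+1))^p · H[(f+g)^p]`, and taking `p`-th roots gives the claim. -/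

open MeasureTheory Real Set

/-- Kernel of the generalized proportional Hadamard fractional integral. -/
noncomputable def Hker (α β x : ℝ) (z : ℝ → ℝ) (t : ℝ) : ℝ :=
  Real.exp ((β - 1) / β * (Real.log x - Real.log t)) *
    (Real.log x - Real.log t) ^ (α - 1) * z t / t

/-- The one-sided generalized proportional Hadamard fractional integral
`H^{α,β}_{1,x}[z](x)`. -/
noncomputable def H (α β x : ℝ) (z : ℝ → ℝ) : ℝ :=
  (1 / (β ^ α * Real.Gamma α)) * ∫ t in Set.Ioo 1 x, Hker α β x z t

lemma le_div_add_one_mul_add {a b M : ℝ} (ha : 0 ≤ a) (hb : 0 < b) (h : a / b ≤ M) :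
    a ≤ M / (M + 1) * (a + b) := by
  have hM : 0 ≤ M := (div_nonneg ha hb.le).trans h
  have hab : a ≤ M * b := (div_le_iff₀ hb).mp h
  rw [div_mul_eq_mul_div, le_div_iff₀ (by linarith)]
  linarith

lemma rpow_one_div_le_mul_rpow_one_div {a b c p : ℝ} (ha : 0 ≤ a) (hb : 0 ≤ b) (hc : 0 ≤ c)
    (hp : 0 < p) (h : a ≤ c ^ p * b) : a ^ (1 / p) ≤ c * b ^ (1 / p) :=
  calc a ^ (1 / p) ≤ (c ^ p * b) ^ (1 / p) := rpow_le_rpow ha h (by positivity)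
    _ = c * b ^ (1 / p) := by
      rw [mul_rpow (by positivity) hb, ← rpow_mul hc, mul_one_div_cancel hp.ne', rpow_one]

section HadamardIntegral

variable {α β x : ℝ} {z w : ℝ → ℝ}

lemma Hker_mono {t : ℝ} (ht : t ∈ Ioc 0 x) (h : z t ≤ w t) :
    Hker α β x z t ≤ Hker α β x w t := by
  have hlog : 0 ≤ log x - log t := sub_nonneg.2 (log_le_log ht.1 ht.2)
  have ht0 : 0 < t := ht.1
  unfold Hker
  gcongr

lemma Hker_nonneg {t : ℝ} (ht : t ∈ Ioc 0 x) (h : 0 ≤ z t) : 0 ≤ Hker α β x z t := by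
  simpa [Hker] using Hker_mono (z := fun _ => 0) (α := α) (β := β) ht h

lemma Hker_const_mul (c : ℝ) :
    Hker α β x (fun t => c * z t) = fun t => c * Hker α β x z t := by
  funext t
  simp only [Hker]
  ring

lemma H_const_mul (c : ℝ) : H α β x (fun t => c * z t) = c * H α β x z := by
  simp only [H, Hker_const_mul, integral_const_mul]
  ring

lemma H_nonneg (hβ : 0 ≤ β) (hα : 0 < α) (hz : ∀ t ∈ Ioo 1 x, 0 ≤ z t) : 0 ≤ H α β x z := by
  have := Gamma_pos_of_pos hα
  refine mul_nonneg (by positivity) (setIntegral_nonneg measurableSet_Ioo fun t ht => ?_)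
  exact Hker_nonneg ⟨zero_lt_one.trans ht.1, ht.2.le⟩ (hz t ht)

lemma H_mono (hβ : 0 ≤ β) (hα : 0 < α) (hz : ∀ t ∈ Ioo 1 x, 0 ≤ z t)
    (hzw : ∀ t ∈ Ioo 1 x, z t ≤ w t) (hw : IntegrableOn (Hker α β x w) (Ioo 1 x)) :
    H α β x z ≤ H α β x w := by
  have := Gamma_pos_of_pos hα
  have hpos : ∀ t ∈ Ioo 1 x, t ∈ Ioc 0 x := fun t ht => ⟨zero_lt_one.trans ht.1, ht.2.le⟩
  refine mul_le_mul_of_nonneg_left (integral_mono_of_nonneg ?_ hw ?_) (by positivity)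
  · exact ae_restrict_of_forall_mem measurableSet_Ioo fun t ht => Hker_nonneg (hpos t ht) (hz t ht)
  · exact ae_restrict_of_forall_mem measurableSet_Ioo fun t ht => Hker_mono (hpos t ht) (hzw t ht)

end HadamardIntegral

theorem stmt_5_general (p α β M x : ℝ) (f g : ℝ → ℝ) (hp : 1 ≤ p) (hα : 0 < α)
    (hβ : β ∈ Set.Ioc (0:ℝ) 1) (hx : 1 < x)
    (hf : ∀ t ∈ Set.Ici (1:ℝ), 0 < f t) (hg : ∀ t ∈ Set.Ici (1:ℝ), 0 < g t)
    (hfgint : IntegrableOn (Hker α β x (fun t => (f t + g t) ^ p)) (Set.Ioo 1 x))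
    (hbound : ∀ t ∈ Set.Ioo (1:ℝ) x, f t / g t ≤ M) :
    (H α β x fun t => f t ^ p) ^ (1 / p) ≤
      M / (M + 1) * (H α β x fun t => (f t + g t) ^ p) ^ (1 / p) := by
  have hp0 : 0 < p := zero_lt_one.trans_le hp
  have hβ0 : 0 ≤ β := hβ.1.le
  have hmid : (1 + x) / 2 ∈ Ioo 1 x := ⟨by linarith, by linarith⟩
  have hM : 0 ≤ M :=
    (div_pos (hf _ hmid.1.le) (hg _ hmid.1.le)).le.trans (hbound _ hmid)
  have hf_pow : ∀ t ∈ Ioo 1 x, 0 ≤ f t ^ p := fun t ht => (rpow_pos_of_pos (hf t ht.1.le) p).le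
  have hfg_pow : ∀ t ∈ Ioo 1 x, 0 ≤ (f t + g t) ^ p := fun t ht =>
    rpow_nonneg (add_pos (hf t ht.1.le) (hg t ht.1.le)).le p
  have hpointwise : ∀ t ∈ Ioo 1 x, f t ^ p ≤ (M / (M + 1)) ^ p * (f t + g t) ^ p := by
    intro t ht
    have hft := hf t ht.1.le
    have hgt := hg t ht.1.le
    rw [← mul_rpow (by positivity) (by positivity)]
    exact rpow_le_rpow hft.le (le_div_add_one_mul_add hft.le hgt (hbound t ht)) hp0.le
  refine rpow_one_div_le_mul_rpow_one_div (H_nonneg hβ0 hα hf_pow) (H_nonneg hβ0 hα hfg_pow)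
    (by positivity) hp0 ?_
  rw [← H_const_mul]
  refine H_mono hβ0 hα hf_pow hpointwise ?_
  rw [Hker_const_mul]
  exact hfgint.const_mul _

theorem stmt_5 (p α β M x : ℝ) (f g : ℝ → ℝ) (hp : 1 ≤ p) (hα : 0 < α)
    (hβ : β ∈ Set.Ioc (0:ℝ) 1) (hx : 1 < x)
    (hf : ∀ t ∈ Set.Ici (1:ℝ), 0 < f t) (hg : ∀ t ∈ Set.Ici (1:ℝ), 0 < g t)
    (hfint : IntegrableOn (Hker α β x (fun t => f t ^ p)) (Set.Ioo 1 x))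
    (hfgint : IntegrableOn (Hker α β x (fun t => (f t + g t) ^ p)) (Set.Ioo 1 x))
    (hbound : ∀ t ∈ Set.Ioo (1:ℝ) x, f t / g t ≤ M) :
    (H α β x fun t => f t ^ p) ^ (1 / p) ≤
      M / (M + 1) * (H α β x fun t => (f t + g t) ^ p) ^ (1 / p) :=
  stmt_5_general p α β M x f g hp hα hβ hx hf hg hfgint hbound
end

section
/- Let p > 1, 1/p + 1/q = 1, α > 0, β ∈ (0,1], x > 1, and let f, g be positive functions on [1,∞) with H^{α,β}_{1,x}[f^p](x) < ∞, H^{α,β}_{1,x}[g^q](x) < ∞. If 0 < m ≤ f(τ)^p / g(τ)^q ≤ M < ∞ for τ ∈ [1,x], then (H^{α,β}_{1,x}[f^p](x))^{1/p} · (H^{α,β}_{1,x}[g^q](x))^{1/q} ≤ (M/m)^{1/(pq)} · H^{α,β}_{1,x}[fg](x). -/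
open MeasureTheory Real

/-!
Writing `φ = w f^p` and `ψ = w g^q`, where `w ≥ 0` is the weight of `H`, one has
`φ^{1/p} ψ^{1/q} = w f g`, and the ratio bounds become `m ψ ≤ φ ≤ M ψ`. Splitting
`φ = φ^{1/p} φ^{1/q} ≤ M^{1/q} φ^{1/p} ψ^{1/q}` and
`ψ = ψ^{1/p} ψ^{1/q} ≤ m^{-1/p} φ^{1/p} ψ^{1/q}`, integrating, raising the two bounds to the
powers `1/p` and `1/q` and multiplying them gives the reverse Hölder inequality.
-/

open Set

section ReverseHolder

variable {p q : ℝ}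

theorem Real.HolderConjugate.rpow_one_div_mul_rpow_one_div (hpq : p.HolderConjugate q)
    {a : ℝ} (ha : 0 ≤ a) : a ^ (1 / p) * a ^ (1 / q) = a := by
  rw [← rpow_add' ha (by rw [hpq.one_div_add_one_div]; norm_num), hpq.one_div_add_one_div,
    div_one, rpow_one]

theorem Real.HolderConjugate.rpow_mul_rpow_mul (hpq : p.HolderConjugate q)
    {w a b : ℝ} (hw : 0 ≤ w) (ha : 0 ≤ a) (hb : 0 ≤ b) :
    (w * a ^ p) ^ (1 / p) * (w * b ^ q) ^ (1 / q) = w * (a * b) := by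
  rw [mul_rpow hw (rpow_nonneg ha p), mul_rpow hw (rpow_nonneg hb q), one_div, one_div,
    rpow_rpow_inv ha hpq.ne_zero, rpow_rpow_inv hb hpq.symm.ne_zero, ← one_div, ← one_div]
  calc w ^ (1 / p) * a * (w ^ (1 / q) * b) = (w ^ (1 / p) * w ^ (1 / q)) * (a * b) := by ring
    _ = w * (a * b) := by rw [hpq.rpow_one_div_mul_rpow_one_div hw]

theorem Real.HolderConjugate.le_mul_rpow_mul_rpow_of_le_mul (hpq : p.HolderConjugate q)
    {a b M : ℝ} (ha : 0 ≤ a) (hb : 0 ≤ b) (hM : 0 ≤ M) (h : a ≤ M * b) :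
    a ≤ M ^ (1 / q) * (a ^ (1 / p) * b ^ (1 / q)) :=
  calc a = a ^ (1 / p) * a ^ (1 / q) := (hpq.rpow_one_div_mul_rpow_one_div ha).symm
    _ ≤ a ^ (1 / p) * (M * b) ^ (1 / q) := by
      gcongr; exact hpq.symm.one_div_nonneg
    _ = M ^ (1 / q) * (a ^ (1 / p) * b ^ (1 / q)) := by rw [mul_rpow hM hb]; ring

theorem Real.HolderConjugate.rpow_mul_rpow_le_of_le_mul (hpq : p.HolderConjugate q)
    {A B C M N : ℝ} (hA : 0 ≤ A) (hB : 0 ≤ B) (hC : 0 ≤ C) (hM : 0 ≤ M) (hN : 0 ≤ N)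
    (hAC : A ≤ M ^ (1 / q) * C) (hBC : B ≤ N ^ (1 / p) * C) :
    A ^ (1 / p) * B ^ (1 / q) ≤ (M * N) ^ (1 / (p * q)) * C :=
  calc A ^ (1 / p) * B ^ (1 / q)
      ≤ (M ^ (1 / q) * C) ^ (1 / p) * (N ^ (1 / p) * C) ^ (1 / q) := by
        gcongr
        · exact hpq.one_div_nonneg
        · exact hpq.symm.one_div_nonneg
    _ = (M * N) ^ (1 / (p * q)) * (C ^ (1 / p) * C ^ (1 / q)) := by
        rw [mul_rpow (by positivity) hC, mul_rpow (by positivity) hC, ← rpow_mul hM,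
          ← rpow_mul hN, mul_rpow hM hN, one_div_mul_one_div, one_div_mul_one_div, mul_comm q p]
        ring
    _ = (M * N) ^ (1 / (p * q)) * C := by rw [hpq.rpow_one_div_mul_rpow_one_div hC]

variable {X : Type*} [MeasurableSpace X] {μ : Measure X} {φ ψ : X → ℝ}

theorem Real.HolderConjugate.integrable_rpow_mul_rpow (hpq : p.HolderConjugate q)
    (hφ : Integrable φ μ) (hψ : Integrable ψ μ) (hφ0 : 0 ≤ᵐ[μ] φ) (hψ0 : 0 ≤ᵐ[μ] ψ) :
    Integrable (fun t => φ t ^ (1 / p) * ψ t ^ (1 / q)) μ := by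
  refine ((hφ.const_mul (1 / p)).add (hψ.const_mul (1 / q))).mono'
    ((hφ.aemeasurable.pow_const _).mul (hψ.aemeasurable.pow_const _)).aestronglyMeasurable ?_
  filter_upwards [hφ0, hψ0] with t hφt hψt
  rw [norm_of_nonneg (mul_nonneg (rpow_nonneg hφt _) (rpow_nonneg hψt _))]
  exact geom_mean_le_arith_mean2_weighted hpq.one_div_nonneg hpq.symm.one_div_nonneg hφt hψt
    (by rw [hpq.one_div_add_one_div, div_one])

theorem Real.HolderConjugate.integral_rpow_mul_integral_rpow_le (hpq : p.HolderConjugate q)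
    {m M : ℝ} (hm : 0 < m) (hM : 0 ≤ M) (hφ : Integrable φ μ) (hψ : Integrable ψ μ)
    (hψ0 : 0 ≤ᵐ[μ] ψ) (hlow : ∀ᵐ t ∂μ, m * ψ t ≤ φ t) (hup : ∀ᵐ t ∂μ, φ t ≤ M * ψ t) :
    (∫ t, φ t ∂μ) ^ (1 / p) * (∫ t, ψ t ∂μ) ^ (1 / q) ≤
      (M / m) ^ (1 / (p * q)) * ∫ t, φ t ^ (1 / p) * ψ t ^ (1 / q) ∂μ := by
  have hφ0 : 0 ≤ᵐ[μ] φ := by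
    filter_upwards [hψ0, hlow] with t hψt hlowt
    exact (mul_nonneg hm.le hψt).trans hlowt
  have hint := hpq.integrable_rpow_mul_rpow hφ hψ hφ0 hψ0
  have hφ_le : ∫ t, φ t ∂μ ≤ M ^ (1 / q) * ∫ t, φ t ^ (1 / p) * ψ t ^ (1 / q) ∂μ := by
    rw [← integral_const_mul]
    refine integral_mono_ae hφ (hint.const_mul _) ?_
    filter_upwards [hφ0, hψ0, hup] with t hφt hψt hupt
    exact hpq.le_mul_rpow_mul_rpow_of_le_mul hφt hψt hM hupt
  have hψ_le : ∫ t, ψ t ∂μ ≤ m⁻¹ ^ (1 / p) * ∫ t, φ t ^ (1 / p) * ψ t ^ (1 / q) ∂μ := by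
    rw [← integral_const_mul]
    refine integral_mono_ae hψ (hint.const_mul _) ?_
    filter_upwards [hφ0, hψ0, hlow] with t hφt hψt hlowt
    rw [mul_comm (φ t ^ _)]
    exact hpq.symm.le_mul_rpow_mul_rpow_of_le_mul hψt hφt (inv_nonneg.mpr hm.le)
      ((le_inv_mul_iff₀ hm).mpr hlowt)
  rw [div_eq_mul_inv]
  exact hpq.rpow_mul_rpow_le_of_le_mul (integral_nonneg_of_ae hφ0) (integral_nonneg_of_ae hψ0)
    (integral_nonneg_of_ae (by
      filter_upwards [hφ0, hψ0] with t hφt hψt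
      exact mul_nonneg (rpow_nonneg hφt _) (rpow_nonneg hψt _)))
    hM (inv_nonneg.mpr hm.le) hφ_le hψ_le

end ReverseHolder

noncomputable def hadamardWeight (α β x t : ℝ) : ℝ :=
  1 / (β ^ α * Gamma α) * Hker α β x 1 t

theorem hadamardWeight_mul_eq_mul_Hker (α β x : ℝ) (z : ℝ → ℝ) (t : ℝ) :
    hadamardWeight α β x t * z t = 1 / (β ^ α * Gamma α) * Hker α β x z t := by
  simp only [hadamardWeight, Hker, Pi.one_apply]
  ring

theorem H_eq_integral_hadamardWeight_mul (α β x : ℝ) (z : ℝ → ℝ) :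
    H α β x z = ∫ t in Ioo 1 x, hadamardWeight α β x t * z t := by
  simp only [H, hadamardWeight_mul_eq_mul_Hker, integral_const_mul]

theorem MeasureTheory.IntegrableOn.hadamardWeight_mul {α β x : ℝ} {z : ℝ → ℝ} {s : Set ℝ}
    (hz : IntegrableOn (Hker α β x z) s) :
    IntegrableOn (fun t => hadamardWeight α β x t * z t) s := by
  simpa only [IntegrableOn, hadamardWeight_mul_eq_mul_Hker] using hz.const_mul _

theorem hadamardWeight_nonneg {α β x t : ℝ} (hα : 0 < α) (hβ : 0 < β) (ht : 0 < t)
    (htx : t ≤ x) : 0 ≤ hadamardWeight α β x t := by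
  have hlog : 0 ≤ log x - log t := sub_nonneg.mpr (log_le_log ht htx)
  have := Gamma_pos_of_pos hα
  have := rpow_nonneg hlog (α - 1)
  simp only [hadamardWeight, Hker, Pi.one_apply]
  positivity

theorem stmt_8 (p q α β m M x : ℝ) (f g : ℝ → ℝ) (hp : 1 < p)
    (hpq : 1 / p + 1 / q = 1) (hα : 0 < α) (hβ : β ∈ Set.Ioc (0:ℝ) 1) (hx : 1 < x)
    (hf : ∀ t ∈ Set.Ici (1:ℝ), 0 < f t) (hg : ∀ t ∈ Set.Ici (1:ℝ), 0 < g t)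
    (hfint : IntegrableOn (Hker α β x (fun t => f t ^ p)) (Set.Ioo 1 x))
    (hgint : IntegrableOn (Hker α β x (fun t => g t ^ q)) (Set.Ioo 1 x))
    (hm : 0 < m)
    (hbound : ∀ t ∈ Set.Icc (1:ℝ) x, m ≤ f t ^ p / g t ^ q ∧ f t ^ p / g t ^ q ≤ M) :
    (H α β x fun t => f t ^ p) ^ (1 / p) * (H α β x fun t => g t ^ q) ^ (1 / q) ≤
      (M / m) ^ (1 / (p * q)) * H α β x (fun t => f t * g t) := by
  have hpq' : p.HolderConjugate q :=
    holderConjugate_iff.mpr ⟨hp, by simpa only [one_div] using hpq⟩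
  set w := hadamardWeight α β x
  have hw : ∀ t ∈ Ioo 1 x, 0 ≤ w t := fun t ht =>
    hadamardWeight_nonneg hα hβ.1 (one_pos.trans ht.1) ht.2.le
  have hratio : ∀ t ∈ Ioo 1 x, m * g t ^ q ≤ f t ^ p ∧ f t ^ p ≤ M * g t ^ q := fun t ht =>
    (hbound t (Ioo_subset_Icc_self ht)).imp (le_div_iff₀ (rpow_pos_of_pos (hg t ht.1.le) q)).mp
      (div_le_iff₀ (rpow_pos_of_pos (hg t ht.1.le) q)).mp
  have hmM := (hbound 1 ⟨le_rfl, hx.le⟩).1.trans (hbound 1 ⟨le_rfl, hx.le⟩).2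
  have key := hpq'.integral_rpow_mul_integral_rpow_le (μ := volume.restrict (Ioo 1 x))
    (φ := fun t => w t * f t ^ p) (ψ := fun t => w t * g t ^ q) hm (hm.le.trans hmM)
    hfint.hadamardWeight_mul hgint.hadamardWeight_mul
    (ae_restrict_of_forall_mem measurableSet_Ioo fun t ht =>
      mul_nonneg (hw t ht) (rpow_nonneg (hg t ht.1.le).le q))
    (ae_restrict_of_forall_mem measurableSet_Ioo fun t ht => by
      simpa only [mul_left_comm m] using mul_le_mul_of_nonneg_left (hratio t ht).1 (hw t ht))
    (ae_restrict_of_forall_mem measurableSet_Ioo fun t ht => by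
      simpa only [mul_left_comm M] using mul_le_mul_of_nonneg_left (hratio t ht).2 (hw t ht))
  rwa [setIntegral_congr_fun measurableSet_Ioo fun t ht =>
    hpq'.rpow_mul_rpow_mul (hw t ht) (hf t ht.1.le).le (hg t ht.1.le).le,
    ← H_eq_integral_hadamardWeight_mul, ← H_eq_integral_hadamardWeight_mul,
    ← H_eq_integral_hadamardWeight_mul] at key
end

section
/- Let f, h be positive continuous functions on [1,∞) with f ≤ h, and suppose f/h is decreasing and f is increasing on [1,∞). Then for any p ≥ 1, α > 0, β ∈ (0,1], x > 1: H^{α,β}_{1,x}[f](x) / H^{α,β}_{1,x}[h](x) ≥ H^{α,β}_{1,x}[f^p](x) / H^{α,β}_{1,x}[h^p](x). -/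
open MeasureTheory Real

/-! Writing `k t` for the kernel, the claim is `∫ k f^p · ∫ k h ≤ ∫ k f · ∫ k h^p` (the normalising
constant cancels). For `t ≤ s`, monotonicity of `f` and of `f/h` give `f t ≤ f s` and
`f s h t ≤ f t h s`, whence `f(t)^p h(s) + f(s)^p h(t) ≤ f(t) h(s)^p + f(s) h(t)^p`. Multiplying by
`k t k s ≥ 0` and integrating over the square `(1, x)²` gives the claim, since each side of the
symmetric pointwise inequality integrates to twice one side of the claim. -/

lemma rpow_mul_add_rpow_mul_le {p a b c d : ℝ} (hp : 1 ≤ p) (ha : 0 < a) (hab : a ≤ b)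
    (hac : a ≤ c) (hbd : b ≤ d) (hcross : b * c ≤ a * d) :
    a ^ p * d + b ^ p * c ≤ a * d ^ p + b * c ^ p := by
  have hb : 0 < b := ha.trans_le hab
  have hd : 0 < d := hb.trans_le hbd
  have hc : 0 < c := ha.trans_le hac
  have hpow : ∀ {y : ℝ}, 0 < y → y ^ p = y ^ (p - 1) * y := fun hy => by
    rw [← Real.rpow_add_one hy.ne', sub_add_cancel]
  have hab' : a ^ (p - 1) ≤ b ^ (p - 1) := Real.rpow_le_rpow ha.le hab (by linarith)
  have hac' : a ^ (p - 1) ≤ c ^ (p - 1) := Real.rpow_le_rpow ha.le hac (by linarith)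
  have hbd' : b ^ (p - 1) ≤ d ^ (p - 1) := Real.rpow_le_rpow hb.le hbd (by linarith)
  rw [hpow ha, hpow hb, hpow hc, hpow hd]
  -- the first step is `(b^(p-1) - a^(p-1)) (a d - b c) ≥ 0`
  calc a ^ (p - 1) * a * d + b ^ (p - 1) * b * c
      ≤ a * (b ^ (p - 1) * d) + b * (a ^ (p - 1) * c) := by
        nlinarith [mul_nonneg (sub_nonneg.2 hcross) (sub_nonneg.2 hab')]
    _ ≤ a * (d ^ (p - 1) * d) + b * (c ^ (p - 1) * c) := by
        gcongr

lemma rpow_mul_add_le_of_monotoneOn_of_antitoneOn_div {α : Type*} [LinearOrder α] {S : Set α}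
    {f h : α → ℝ} {p : ℝ} (hp : 1 ≤ p) (hf : ∀ t ∈ S, 0 < f t) (hh : ∀ t ∈ S, 0 < h t)
    (hle : ∀ t ∈ S, f t ≤ h t) (hdec : AntitoneOn (fun t => f t / h t) S)
    (hinc : MonotoneOn f S) {t s : α} (ht : t ∈ S) (hs : s ∈ S) :
    f t ^ p * h s + h t * f s ^ p ≤ f t * h s ^ p + h t ^ p * f s := by
  wlog hts : t ≤ s generalizing t s
  · linarith [this hs ht (le_of_not_ge hts)]
  have hcross : f s * h t ≤ f t * h s := by
    have := hdec ht hs hts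
    rwa [div_le_div_iff₀ (hh s hs) (hh t ht)] at this
  linarith [rpow_mul_add_rpow_mul_le hp (hf t ht) (hinc ht hs hts) (hle t ht) (hle s hs) hcross]

lemma setIntegral_mul_setIntegral_le_of_le {α : Type*} [MeasurableSpace α] {μ : Measure α}
    [SFinite μ] {s : Set α} (hs : MeasurableSet s) {u v w y : α → ℝ} (hu : IntegrableOn u s μ)
    (hv : IntegrableOn v s μ) (hw : IntegrableOn w s μ) (hy : IntegrableOn y s μ)
    (hle : ∀ t ∈ s, ∀ r ∈ s, u t * v r + v t * u r ≤ w t * y r + y t * w r) :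
    (∫ t in s, u t ∂μ) * (∫ t in s, v t ∂μ) ≤ (∫ t in s, w t ∂μ) * ∫ t in s, y t ∂μ := by
  have hmem : ∀ᵐ z ∂(μ.restrict s).prod (μ.restrict s), z ∈ s ×ˢ s := by
    rw [Measure.prod_restrict]
    exact ae_restrict_mem (hs.prod hs)
  have hint := integral_mono_ae ((hu.mul_prod hv).add (hv.mul_prod hu))
    ((hw.mul_prod hy).add (hy.mul_prod hw))
    (hmem.mono fun z hz => hle z.1 hz.1 z.2 hz.2)
  simp only [Pi.add_apply] at hint
  rw [integral_add (hu.mul_prod hv) (hv.mul_prod hu), integral_add (hw.mul_prod hy)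
    (hy.mul_prod hw), integral_prod_mul, integral_prod_mul, integral_prod_mul,
    integral_prod_mul] at hint
  linarith

lemma Hker_eq_mul (α β x : ℝ) (z : ℝ → ℝ) (t : ℝ) :
    Hker α β x z t = Hker α β x (fun _ => 1) t * z t := by
  simp only [Hker]
  ring

lemma Hker_one_pos (α β : ℝ) {x t : ℝ} (ht : 0 < t) (htx : t < x) :
    0 < Hker α β x (fun _ => 1) t := by
  have hlog : 0 < Real.log x - Real.log t := sub_pos.2 (Real.log_lt_log ht htx)
  simp only [Hker, mul_one]
  positivity

theorem stmt_17_general (p α β x : ℝ) (f h : ℝ → ℝ) (hp : 1 ≤ p)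
    (hf : ∀ t ∈ Set.Ici (1:ℝ), 0 < f t) (hh : ∀ t ∈ Set.Ici (1:ℝ), 0 < h t)
    (hle : ∀ t ∈ Set.Ici (1:ℝ), f t ≤ h t)
    (hdec : AntitoneOn (fun t => f t / h t) (Set.Ici 1))
    (hinc : MonotoneOn f (Set.Ici 1))
    (hfint : IntegrableOn (Hker α β x f) (Set.Ioo 1 x))
    (hhint : IntegrableOn (Hker α β x h) (Set.Ioo 1 x))
    (hfpint : IntegrableOn (Hker α β x (fun t => f t ^ p)) (Set.Ioo 1 x))
    (hhpint : IntegrableOn (Hker α β x (fun t => h t ^ p)) (Set.Ioo 1 x))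
    (hhpos : 0 < H α β x h) (hhppos : 0 < H α β x (fun t => h t ^ p)) :
    H α β x (fun t => f t ^ p) / H α β x (fun t => h t ^ p) ≤
      H α β x f / H α β x h := by
  have key := setIntegral_mul_setIntegral_le_of_le measurableSet_Ioo hfpint hhint hfint hhpint
    fun t ht r hr => by
      have hkt := (Hker_one_pos α β (zero_lt_one.trans ht.1) ht.2).le
      have hkr := (Hker_one_pos α β (zero_lt_one.trans hr.1) hr.2).le
      have hpt := rpow_mul_add_le_of_monotoneOn_of_antitoneOn_div hp hf hh hle hdec hinc
        ht.1.le hr.1.le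
      simp only [Hker_eq_mul α β x f, Hker_eq_mul α β x h, Hker_eq_mul α β x (fun t => f t ^ p),
        Hker_eq_mul α β x (fun t => h t ^ p)]
      nlinarith [mul_le_mul_of_nonneg_left hpt (mul_nonneg hkt hkr)]
  rw [div_le_div_iff₀ hhppos hhpos]
  simp only [H]
  nlinarith [mul_le_mul_of_nonneg_left key (mul_self_nonneg (1 / (β ^ α * Real.Gamma α)))]

theorem stmt_17 (p α β x : ℝ) (f h : ℝ → ℝ) (hp : 1 ≤ p) (hα : 0 < α)
    (hβ : β ∈ Set.Ioc (0:ℝ) 1) (hx : 1 < x)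
    (hf : ∀ t ∈ Set.Ici (1:ℝ), 0 < f t) (hh : ∀ t ∈ Set.Ici (1:ℝ), 0 < h t)
    (hfc : ContinuousOn f (Set.Ici 1)) (hhc : ContinuousOn h (Set.Ici 1))
    (hle : ∀ t ∈ Set.Ici (1:ℝ), f t ≤ h t)
    (hdec : AntitoneOn (fun t => f t / h t) (Set.Ici 1))
    (hinc : MonotoneOn f (Set.Ici 1))
    (hfint : IntegrableOn (Hker α β x f) (Set.Ioo 1 x))
    (hhint : IntegrableOn (Hker α β x h) (Set.Ioo 1 x))
    (hfpint : IntegrableOn (Hker α β x (fun t => f t ^ p)) (Set.Ioo 1 x))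
    (hhpint : IntegrableOn (Hker α β x (fun t => h t ^ p)) (Set.Ioo 1 x))
    (hhpos : 0 < H α β x h) (hhppos : 0 < H α β x (fun t => h t ^ p)) :
    H α β x (fun t => f t ^ p) / H α β x (fun t => h t ^ p) ≤
      H α β x f / H α β x h :=
  stmt_17_general p α β x f h hp hf hh hle hdec hinc hfint hhint hfpint hhpint hhpos hhppos
end
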